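/- arXiv:1503.04610 — 5 statements merged into one kernel-verified Lean document; each statement's English description precedes it below -/
import Mathlib

section
/- For any partial function f : List Bool →. List Bool, the partial function f^C whose domain is {code(x) ++ 11 ++ v : x ∈ Dom(f), v a word} and which is defined by f^C(code(x) ++ 11 ++ v) = code(f(x)) ++ 11 ++ v is well defined (the decomposition of an element of its domain as code(x) ++ 11 ++ v with x ∈ Dom(f) and v a word is unique) and is a right-ideal morphism. -/
/-!
Every `code` block has the form `0b`, so a `1` read at an even position marks the end of
`code x`, and the marker `11` is then the next two letters. Hence `code x ++ 11 ++ v` is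
parsed deterministically by `decodeMarked`, which gives uniqueness of the decomposition, lets
`f^C` be defined without choice, and shows that appending `w` only changes the tail `v`.
-/

def code (x : List Bool) : List Bool := x.flatMap (fun b => [false, b])

def IsRIMorphism (h : List Bool →. List Bool) : Prop :=
  ∀ x ∈ h.Dom, ∀ w : List Bool, h (x ++ w) = (h x).map (· ++ w)

@[simp]
lemma code_cons (b : Bool) (x : List Bool) : code (b :: x) = false :: b :: code x := rfl

/-- Splits `y` as `code x ++ [true, true] ++ v`, returning `(x, v)`. -/
def decodeMarked : List Bool → Option (List Bool × List Bool)
  | false :: b :: y => (decodeMarked y).map (Prod.map (b :: ·) id)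
  | true :: true :: v => some ([], v)
  | _ => none

lemma decodeMarked_code_append (x v : List Bool) :
    decodeMarked (code x ++ [true, true] ++ v) = some (x, v) := by
  induction x with
  | nil => rfl
  | cons b x ih => simp only [code_cons, List.cons_append, decodeMarked, ih]; rfl

lemma eq_code_append_of_decodeMarked {y x v : List Bool}
    (h : decodeMarked y = some (x, v)) : y = code x ++ [true, true] ++ v := by
  induction y using decodeMarked.induct generalizing x with
  | case1 b y ih =>
    simp only [decodeMarked, Option.map_eq_some_iff, Prod.exists, Prod.map, id,
      Prod.mk.injEq] at h
    obtain ⟨x', _, hy, rfl, rfl⟩ := h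
    simp [ih hy]
  | case2 =>
    simp only [decodeMarked, Option.some.injEq, Prod.mk.injEq] at h
    obtain ⟨rfl, rfl⟩ := h
    rfl
  | case3 y _ _ =>
    rcases y with _ | ⟨_ | _, _ | ⟨_ | _, _⟩⟩ <;> simp_all [decodeMarked]

lemma code_append_marker_injective {x₁ x₂ v₁ v₂ : List Bool}
    (h : code x₁ ++ [true, true] ++ v₁ = code x₂ ++ [true, true] ++ v₂) :
    x₁ = x₂ ∧ v₁ = v₂ := by
  have h' := congrArg decodeMarked h
  rw [decodeMarked_code_append, decodeMarked_code_append] at h'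
  simpa using h'

/-- The partial function `f^C`. -/
def codeLift (f : List Bool →. List Bool) : List Bool →. List Bool := fun y =>
  match decodeMarked y with
  | none => Part.none
  | some (x, v) => (f x).map (fun z => code z ++ [true, true] ++ v)

section codeLift

variable (f : List Bool →. List Bool)

lemma codeLift_code_append (x v : List Bool) :
    codeLift f (code x ++ [true, true] ++ v) =
      (f x).map (fun z => code z ++ [true, true] ++ v) := by
  simp only [codeLift, decodeMarked_code_append]

lemma dom_codeLift :
    (codeLift f).Dom = {y | ∃ x ∈ f.Dom, ∃ v : List Bool, y = code x ++ [true, true] ++ v} := by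
  ext y
  constructor
  · intro hy
    change (codeLift f y).Dom at hy
    rcases hdec : decodeMarked y with _ | ⟨x, v⟩
    · simp [codeLift, hdec] at hy
    · simp only [codeLift, hdec, Part.map_Dom] at hy
      exact ⟨x, hy, v, eq_code_append_of_decodeMarked hdec⟩
  · rintro ⟨x, hx, v, rfl⟩
    change (codeLift f _).Dom
    rwa [codeLift_code_append]

lemma isRIMorphism_codeLift : IsRIMorphism (codeLift f) := by
  intro y hy w
  rw [dom_codeLift] at hy
  obtain ⟨x, -, v, rfl⟩ := hy
  rw [List.append_assoc _ v, codeLift_code_append, codeLift_code_append, Part.map_map]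
  simp [Function.comp_def]

end codeLift

/-- The partial function `f^C` with domain `{code(x) ++ 11 ++ v : x ∈ Dom f, v ∈ A*}`
and `f^C (code(x) ++ 11 ++ v) = code (f x) ++ 11 ++ v` is well defined (the
decomposition of an element of its domain is unique) and is a right-ideal morphism. -/
theorem fC_wellDefined_and_rim (f : List Bool →. List Bool) :
    (∀ x₁ x₂ v₁ v₂ : List Bool, x₁ ∈ f.Dom → x₂ ∈ f.Dom →
        code x₁ ++ [true, true] ++ v₁ = code x₂ ++ [true, true] ++ v₂ →
        x₁ = x₂ ∧ v₁ = v₂) ∧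
    ∃ F : List Bool →. List Bool,
      F.Dom = {y | ∃ x ∈ f.Dom, ∃ v : List Bool, y = code x ++ [true, true] ++ v} ∧
      (∀ x ∈ f.Dom, ∀ v : List Bool,
          F (code x ++ [true, true] ++ v) =
            (f x).map (fun y => code y ++ [true, true] ++ v)) ∧
      IsRIMorphism F :=
  ⟨fun _ _ _ _ _ _ h => code_append_marker_injective h,
    codeLift f, dom_codeLift f, fun x _ v => codeLift_code_append f x v,
    isRIMorphism_codeLift f⟩
end

section
/- The transformation f ↦ f^C is an injective multiplicative embedding: for all partial functions f, g : List Bool →. List Bool one has (g ∘ f)^C = g^C ∘ f^C (composition of partial functions), and f^C = g^C implies f = g. -/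
/-- The encoding `f ↦ f^C`: the partial function with domain
`{code(x) ++ 11 ++ v : x ∈ Dom f, v ∈ A*}` defined by
`f^C (code(x) ++ 11 ++ v) = code (f x) ++ 11 ++ v`. -/
noncomputable def fC (f : List Bool →. List Bool) : List Bool →. List Bool :=
  fun y =>
    ⟨∃ x v : List Bool, x ∈ f.Dom ∧ y = code x ++ [true, true] ++ v,
     fun h =>
       code ((f h.choose).get h.choose_spec.choose_spec.1) ++ [true, true] ++
         h.choose_spec.choose⟩

/-- Every letter of `code x` in an even position is `0`, so a `1` there marks the end of the
code word. -/
lemma code_append_true_inj {x x' v v' : List Bool}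
    (h : code x ++ true :: v = code x' ++ true :: v') : x = x' ∧ v = v' := by
  induction x generalizing x' with
  | nil => cases x' <;> simp_all [code]
  | cons b xs ih =>
    cases x' with
    | nil => simp [code] at h
    | cons b' xs' =>
      simp only [code, List.flatMap_cons, List.cons_append, List.nil_append,
        List.cons.injEq, true_and] at h
      obtain ⟨rfl, h⟩ := h
      exact ⟨congrArg _ (ih h).1, (ih h).2⟩

lemma code_injective : Function.Injective code := fun x x' h =>
  (code_append_true_inj (v := []) (v' := []) (by rw [h])).1

lemma code_append_eq_code_append_iff {x x' v v' : List Bool} :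
    code x ++ [true, true] ++ v = code x' ++ [true, true] ++ v' ↔ x = x' ∧ v = v' := by
  refine ⟨fun h => ?_, fun ⟨hx, hv⟩ => hx ▸ hv ▸ rfl⟩
  obtain ⟨hx, hv⟩ := code_append_true_inj (v := true :: v) (v' := true :: v') (by simpa using h)
  exact ⟨hx, (List.cons.inj hv).2⟩

lemma mem_fC {f : List Bool →. List Bool} {y z : List Bool} :
    z ∈ fC f y ↔ ∃ x v w, w ∈ f x ∧ y = code x ++ [true, true] ++ v ∧
      z = code w ++ [true, true] ++ v := by
  constructor
  · rintro ⟨h, rfl⟩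
    exact ⟨h.choose, h.choose_spec.choose, (f h.choose).get h.choose_spec.choose_spec.1,
      Part.get_mem _, h.choose_spec.choose_spec.2, rfl⟩
  · rintro ⟨x, v, w, hw, rfl, rfl⟩
    have h : ∃ x' v', x' ∈ f.Dom ∧ code x ++ [true, true] ++ v = code x' ++ [true, true] ++ v' :=
      ⟨x, v, Part.dom_iff_mem.mpr ⟨w, hw⟩, rfl⟩
    obtain ⟨hx, hv⟩ := code_append_eq_code_append_iff.mp h.choose_spec.choose_spec.2
    have hval : (f h.choose).get h.choose_spec.choose_spec.1 = w :=
      Part.mem_unique (Part.get_mem _) (hx ▸ hw)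
    refine ⟨h, ?_⟩
    change code ((f h.choose).get h.choose_spec.choose_spec.1) ++ [true, true] ++
      h.choose_spec.choose = _
    rw [hval, ← hv]

lemma mem_fC_code_append {f : List Bool →. List Bool} {x v z : List Bool} :
    z ∈ fC f (code x ++ [true, true] ++ v) ↔ ∃ w ∈ f x, z = code w ++ [true, true] ++ v := by
  simp only [mem_fC, code_append_eq_code_append_iff]
  constructor
  · rintro ⟨x, v, w, hw, ⟨rfl, rfl⟩, rfl⟩
    exact ⟨w, hw, rfl⟩
  · rintro ⟨w, hw, rfl⟩
    exact ⟨x, v, w, hw, ⟨rfl, rfl⟩, rfl⟩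

lemma code_append_mem_fC_iff {f : List Bool →. List Bool} {x v w : List Bool} :
    code w ++ [true, true] ++ v ∈ fC f (code x ++ [true, true] ++ v) ↔ w ∈ f x := by
  rw [mem_fC_code_append]
  simp [code_injective.eq_iff]

theorem fC_comp (f g : List Bool →. List Bool) : fC (g.comp f) = (fC g).comp (fC f) := by
  refine PFun.ext fun y z => ?_
  rw [mem_fC]
  simp only [PFun.comp_apply, Part.mem_bind_iff (g := fun u => g u),
    Part.mem_bind_iff (g := fun u => fC g u)]
  constructor
  · rintro ⟨x, v, w, ⟨m, hm, hw⟩, rfl, rfl⟩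
    exact ⟨_, code_append_mem_fC_iff.mpr hm, code_append_mem_fC_iff.mpr hw⟩
  · rintro ⟨u, hu, hz⟩
    obtain ⟨x, v, m, hm, rfl, rfl⟩ := mem_fC.mp hu
    obtain ⟨w, hw, rfl⟩ := mem_fC_code_append.mp hz
    exact ⟨x, v, w, ⟨m, hm, hw⟩, rfl, rfl⟩

theorem fC_injective : Function.Injective fC := by
  intro f g h
  ext x w
  rw [← code_append_mem_fC_iff (v := []), h, code_append_mem_fC_iff]

/-- The transformation `f ↦ f^C` is an injective multiplicative embedding:
`(g ∘ f)^C = g^C ∘ f^C` and `f^C = g^C → f = g`. -/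
theorem fC_embedding :
    (∀ f g : List Bool →. List Bool, fC (g.comp f) = (fC g).comp (fC f)) ∧
    (∀ f g : List Bool →. List Bool, fC f = fC g → f = g) :=
  ⟨fC_comp, fun _ _ h => fC_injective h⟩
end

section
/- Balanced functions have balanced inverses: let f be a right-ideal morphism with balance bounded by q : ℕ → ℕ (for all x ∈ Dom(f), |f(x)| ≤ q(|x|) and |x| ≤ q(|f(x)|)), and let f₁' be any inverse of f, i.e., a partial function with f ∘ f₁' ∘ f = f. Then the restriction f' of f₁' to the set {y ∈ Dom(f₁') : |y| ≤ q(|f₁'(y)|) and |f₁'(y)| ≤ q(|y|)} is again an inverse of f (f ∘ f' ∘ f = f), and f' has balance bounded by q. -/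
/-- `g` has balance bounded by `q` : for all `x ∈ Dom g`,
`|g x| ≤ q |x|` and `|x| ≤ q |g x|`. -/
def HasBalance (q : ℕ → ℕ) (g : List Bool →. List Bool) : Prop :=
  ∀ x y : List Bool, y ∈ g x → y.length ≤ q x.length ∧ x.length ≤ q y.length

/-- The restriction of `g` to `{y ∈ Dom g : |y| ≤ q |g y| and |g y| ≤ q |y|}`. -/
def balRestrict (q : ℕ → ℕ) (g : List Bool →. List Bool) : List Bool →. List Bool :=
  fun y => Part.assert
    (∀ z ∈ g y, y.length ≤ q z.length ∧ z.length ≤ q y.length) (fun _ => g y)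

/-!
`f ∘ f₁' ∘ f` only ever passes through pairs `w ∈ f₁' y` with `y ∈ f w`, so any restriction of
`f₁'` keeping these pairs is still an inverse of `f`. For such a pair the balance of `f` at `w`
gives exactly the bounds that `balRestrict q` demands.
-/

theorem PFun.mem_comp_iff {α β γ : Type*} (f : β →. γ) (g : α →. β) (a : α) (c : γ) :
    c ∈ f.comp g a ↔ ∃ b ∈ g a, c ∈ f b :=
  Part.mem_bind_iff

theorem PFun.comp_comp_eq_of_restrict {α β : Type*} {f : α →. β} {g g' : β →. α}
    (hinv : f.comp (g.comp f) = f) (hsub : ∀ y w, w ∈ g' y → w ∈ g y)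
    (hkeep : ∀ y w, w ∈ g y → y ∈ f w → w ∈ g' y) :
    f.comp (g'.comp f) = f := by
  refine PFun.ext fun x z => ?_
  simp only [PFun.mem_comp_iff]
  constructor
  · rintro ⟨w, ⟨y, hy, hw⟩, hz⟩
    rw [← hinv, PFun.mem_comp_iff]
    exact ⟨w, (PFun.mem_comp_iff _ _ _ _).2 ⟨y, hy, hsub y w hw⟩, hz⟩
  · intro hz
    obtain ⟨w, hw, hzw⟩ := (PFun.mem_comp_iff _ _ _ _).1 (hinv ▸ hz)
    obtain ⟨y, hy, hyw⟩ := (PFun.mem_comp_iff _ _ _ _).1 hw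
    obtain rfl : y = z := Part.mem_unique hy hz
    exact ⟨w, ⟨y, hy, hkeep y w hyw hzw⟩, hzw⟩

theorem mem_balRestrict_iff (q : ℕ → ℕ) (g : List Bool →. List Bool) (y z : List Bool) :
    z ∈ balRestrict q g y ↔ z ∈ g y ∧ y.length ≤ q z.length ∧ z.length ≤ q y.length := by
  simp only [balRestrict, Part.mem_assert_iff]
  exact ⟨fun ⟨h, hz⟩ => ⟨hz, h z hz⟩,
    fun ⟨hz, hbal⟩ => ⟨fun z' hz' => Part.mem_unique hz hz' ▸ hbal, hz⟩⟩

theorem hasBalance_balRestrict (q : ℕ → ℕ) (g : List Bool →. List Bool) :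
    HasBalance q (balRestrict q g) := fun y z hz =>
  ((mem_balRestrict_iff q g y z).1 hz).2.symm

theorem balanced_inverse_general (q : ℕ → ℕ) (f f₁' : List Bool →. List Bool)
    (hbal : HasBalance q f)
    (hinv : f.comp (f₁'.comp f) = f) :
    f.comp ((balRestrict q f₁').comp f) = f ∧ HasBalance q (balRestrict q f₁') :=
  ⟨PFun.comp_comp_eq_of_restrict hinv
      (fun y w hw => ((mem_balRestrict_iff q f₁' y w).1 hw).1)
      (fun y w hw hy => (mem_balRestrict_iff q f₁' y w).2 ⟨hw, hbal w y hy⟩),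
    hasBalance_balRestrict q f₁'⟩

/-- Balanced functions have balanced inverses: if `f` is a right-ideal morphism with
balance `≤ q` and `f₁'` satisfies `f ∘ f₁' ∘ f = f`, then the restriction `f'` of
`f₁'` to `{y ∈ Dom f₁' : |y| ≤ q |f₁' y| and |f₁' y| ≤ q |y|}` again satisfies
`f ∘ f' ∘ f = f` and has balance `≤ q`. -/
theorem balanced_inverse (q : ℕ → ℕ) (f f₁' : List Bool →. List Bool)
    (hrim : IsRIMorphism f) (hbal : HasBalance q f)
    (hinv : f.comp (f₁'.comp f) = f) :
    f.comp ((balRestrict q f₁').comp f) = f ∧ HasBalance q (balRestrict q f₁') :=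
  balanced_inverse_general q f f₁' hbal hinv
end

section
/- For every nonempty word a over {0,1}, the prefix code P_a = {code(aⁿ) ++ 0010 : n ≥ 1} has the following branching property: for every u ∈ P_a and every integer N > 0, there exist v ∈ P_a with |v| > N and words u₀, c, z such that v = u₀ ++ z, u = u₀ ++ c, and |c| ≤ 4. -/
/-- The prefix code `P_a = {code(aⁿ) ++ 0010 : n ≥ 1}`. -/
def Pa (a : List Bool) : Set (List Bool) :=
  {y | ∃ n : ℕ, 1 ≤ n ∧ y = code ((List.replicate n a).flatten) ++ [false, false, true, false]}

/-
Extending `u = code(aⁿ) ++ 0010` to `v = code(aⁿ⁺ᴺ) ++ 0010` keeps the prefix `code(aⁿ)`,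
so `u` and `v` differ only after that prefix, in the last four letters of `u`; since `a ≠ []`,
`v` has length at least `2N + 4 > N`.
-/

theorem code_append (x y : List Bool) : code (x ++ y) = code x ++ code y :=
  List.flatMap_append

theorem length_code (x : List Bool) : (code x).length = 2 * x.length := by
  induction x with
  | nil => rfl
  | cons b x ih =>
    simp only [code, List.flatMap_cons, List.length_append, List.length_cons, List.length_nil]
      at ih ⊢
    omega

theorem code_flatten_replicate_add (a : List Bool) (n m : ℕ) :
    code (List.replicate (n + m) a).flatten =
      code (List.replicate n a).flatten ++ code (List.replicate m a).flatten := by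
  rw [List.replicate_add, List.flatten_append, code_append]

theorem length_code_flatten_replicate (a : List Bool) (n : ℕ) :
    (code (List.replicate n a).flatten).length = 2 * (n * a.length) := by
  simp [length_code, List.length_flatten, List.map_replicate]

/-- Branching property of `P_a`: for every `u ∈ P_a` and every `N > 0` there are
`v ∈ P_a` with `|v| > N` and words `u₀, c, z` with `v = u₀ ++ z`, `u = u₀ ++ c`
and `|c| ≤ 4`. -/
theorem Pa_branching (a : List Bool) (ha : a ≠ []) :
    ∀ u ∈ Pa a, ∀ N : ℕ, 0 < N →
      ∃ v ∈ Pa a, N < v.length ∧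
        ∃ u₀ c z : List Bool, v = u₀ ++ z ∧ u = u₀ ++ c ∧ c.length ≤ 4 := by
  rintro u ⟨n, hn, rfl⟩ N -
  set tail := [false, false, true, false]
  refine ⟨code (List.replicate (n + N) a).flatten ++ tail, ⟨n + N, by omega, rfl⟩, ?_,
    code (List.replicate n a).flatten, tail, code (List.replicate N a).flatten ++ tail,
    by rw [code_flatten_replicate_add, List.append_assoc], rfl, le_rfl⟩
  have hN : n + N ≤ (n + N) * a.length :=
    Nat.le_mul_of_pos_right _ (List.length_pos_iff.mpr ha)
  simp only [List.length_append, length_code_flatten_replicate]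
  omega
end

section
/- Let s be the partial function with domain 0*1A* defined by s(0ⁿ ++ 1 ++ x) = 0^{2n²} ++ 1 ++ x for all n ≥ 0 and words x, and let g : ℕ → ℕ be g(k) = 2k². Then s is a right-ideal morphism; for every m ≥ 0, the m-fold composite sᵐ satisfies sᵐ(0ⁿ ++ 1 ++ x) = 0^{g^[m](n)} ++ 1 ++ x, where g^[m] is the m-fold iterate of g; and for all n ≥ 1 and m ≥ 0, g^[m](n) ≥ 2ᵐ · n^(2ᵐ). In particular the output length of sᵐ on input 0ⁿ1 is at least 2ᵐ · n^(2ᵐ), so the functions sᵐ have unbounded polynomial growth degree as m grows. -/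
/-- The function `s : 0ⁿ ++ 1 ++ x ↦ 0^(2n²) ++ 1 ++ x`, with domain `0*1A*`. -/
noncomputable def sfun : List Bool →. List Bool :=
  fun y =>
    ⟨∃ n : ℕ, ∃ x : List Bool, y = List.replicate n false ++ [true] ++ x,
     fun h =>
       List.replicate (2 * h.choose ^ 2) false ++ [true] ++ h.choose_spec.choose⟩

/-- `m`-fold composite of a partial function (composition of partial functions
iterated `m` times). -/
def pfunPow (f : List Bool →. List Bool) : ℕ → (List Bool →. List Bool)
  | 0 => PFun.id (List Bool)
  | m + 1 => f.comp (pfunPow f m)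

/-
Both `s` and its iterates act on a word `0ⁿ1x` only through the exponent `n`, so `sᵐ`
replaces `n` by `g^[m] n`. Doubling conjugates `g` to squaring, `2 · g k = (2k)²`, whence
`2 · g^[m] n = (2n)^(2ᵐ)`, and the growth bound reduces to `2^(m+1) ≤ 2^(2ᵐ)`.
-/

theorem List.replicate_append_cons_inj {α : Type*} {a b : α} (hab : a ≠ b) {n n' : ℕ}
    {x x' : List α} (h : replicate n a ++ b :: x = replicate n' a ++ b :: x') :
    n = n' ∧ x = x' := by
  induction n generalizing n' with
  | zero => cases n' <;> simp_all [replicate_succ, eq_comm]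
  | succ k ih =>
    cases n' with
    | zero => simp_all [replicate_succ]
    | succ k' => simpa using ih (by simpa [replicate_succ] using h)

theorem sfun_apply (n : ℕ) (x : List Bool) :
    sfun (List.replicate n false ++ [true] ++ x) =
      Part.some (List.replicate (2 * n ^ 2) false ++ [true] ++ x) := by
  have hdom : ∃ n' x',
      List.replicate n false ++ [true] ++ x = List.replicate n' false ++ [true] ++ x' :=
    ⟨n, x, rfl⟩
  obtain ⟨hn, hx⟩ := List.replicate_append_cons_inj (n' := hdom.choose)
    (x' := hdom.choose_spec.choose) Bool.false_ne_true (by simpa using hdom.choose_spec.choose_spec)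
  refine Part.eq_some_iff.2 ⟨hdom, ?_⟩
  show List.replicate (2 * hdom.choose ^ 2) false ++ [true] ++ hdom.choose_spec.choose = _
  exact congrArg₂ (fun k w => List.replicate (2 * k ^ 2) false ++ [true] ++ w) hn.symm hx.symm

theorem isRIMorphism_sfun : IsRIMorphism sfun := by
  rintro _ ⟨n, x, rfl⟩ w
  rw [List.append_assoc (_ ++ _), sfun_apply, sfun_apply, Part.map_some]
  simp

theorem pfunPow_apply_of_apply_eq {β : Type*} {f : List Bool →. List Bool} {e : β → List Bool}
    {g : β → β} (h : ∀ b, f (e b) = Part.some (e (g b))) (m : ℕ) (b : β) :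
    pfunPow f m (e b) = Part.some (e (g^[m] b)) := by
  induction m with
  | zero => rfl
  | succ m ih =>
    rw [Function.iterate_succ_apply', ← h, pfunPow, PFun.comp_apply, ih]
    exact Part.bind_some _ f

theorem two_mul_iterate_two_mul_sq (m n : ℕ) :
    2 * (fun k => 2 * k ^ 2)^[m] n = (2 * n) ^ 2 ^ m := by
  induction m with
  | zero => simp
  | succ m ih => rw [Function.iterate_succ_apply', pow_succ 2 m, pow_mul, ← ih]; ring

theorem two_pow_mul_pow_two_pow_le_iterate_two_mul_sq (m n : ℕ) :
    2 ^ m * n ^ 2 ^ m ≤ (fun k => 2 * k ^ 2)^[m] n := by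
  suffices 2 * (2 ^ m * n ^ 2 ^ m) ≤ 2 * (fun k => 2 * k ^ 2)^[m] n by omega
  calc 2 * (2 ^ m * n ^ 2 ^ m) = 2 ^ (m + 1) * n ^ 2 ^ m := by ring
    _ ≤ 2 ^ 2 ^ m * n ^ 2 ^ m := by gcongr; exacts [one_le_two, Nat.lt_two_pow_self]
    _ = 2 * (fun k => 2 * k ^ 2)^[m] n := by rw [two_mul_iterate_two_mul_sq, mul_pow]

/-- `s` is a right-ideal morphism; the `m`-fold composite `sᵐ` maps
`0ⁿ ++ 1 ++ x` to `0^(g^[m] n) ++ 1 ++ x` where `g k = 2k²`; and for `n ≥ 1`,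
`g^[m] n ≥ 2ᵐ · n^(2ᵐ)`, so in particular the output length of `sᵐ` on input
`0ⁿ1` is at least `2ᵐ · n^(2ᵐ)`. -/
theorem sfun_iterates (g : ℕ → ℕ) (hg : ∀ k : ℕ, g k = 2 * k ^ 2) :
    IsRIMorphism sfun ∧
    (∀ m n : ℕ, ∀ x : List Bool,
        pfunPow sfun m (List.replicate n false ++ [true] ++ x) =
          Part.some (List.replicate (g^[m] n) false ++ [true] ++ x)) ∧
    (∀ n : ℕ, 1 ≤ n → ∀ m : ℕ, 2 ^ m * n ^ 2 ^ m ≤ g^[m] n) ∧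
    (∀ n : ℕ, 1 ≤ n → ∀ m : ℕ, ∀ y : List Bool,
        y ∈ pfunPow sfun m (List.replicate n false ++ [true]) →
        2 ^ m * n ^ 2 ^ m ≤ y.length) := by
  obtain rfl : g = fun k => 2 * k ^ 2 := funext hg
  have hiter : ∀ m n x, _ := fun m n x => pfunPow_apply_of_apply_eq (fun n => sfun_apply n x) m n
  have hgrowth := two_pow_mul_pow_two_pow_le_iterate_two_mul_sq
  refine ⟨isRIMorphism_sfun, hiter, fun n _ m => hgrowth m n, ?_⟩
  intro n _ m y hy
  rw [← List.append_nil (List.replicate n false ++ [true]), hiter, Part.mem_some_iff] at hy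
  subst hy
  simpa using (hgrowth m n).trans (Nat.le_succ _)
end
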